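/- Fix 0 < p < 1, strictly increasing sequences of positive integers (m_k), (n_k), let Λ̃ = ⋃_k (2^{-m_k}ℕ ∩ [n_k, n_{k+1})), and let Λ be a random subset of Λ̃ where each point is kept independently with probability p; set q = 1 - p. If ∑_{k=1}^∞ (1 - (1 - q^{2^{m_k}})^{n_{k+1} - n_k}) = ∞, then almost surely there exist infinitely many k and integers a with [a, a+1) ⊆ [n_k, n_{k+1}) and [a, a+1) ∩ Λ = ∅; in particular Λ is almost surely asymptotically lacunary. -/

import Mathlib

/-!
Split each block `[n k, n (k+1))` into its `n (k+1) - n k` unit intervals. Each one contains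
exactly `2 ^ m k` points of `Λ̃`, so it is entirely deleted with probability `q ^ 2 ^ m k`, and
these events are independent because the unit intervals are disjoint. Bernoulli's inequality
`1 - (1 - x) ^ N ≤ N x` turns the divergence hypothesis into divergence of the sum of these
probabilities, and the second Borel–Cantelli lemma produces infinitely many deleted unit
intervals, which must lie in blocks of arbitrarily large index.
-/

open MeasureTheory Filter ProbabilityTheory
open scoped ENNReal

/-- `Λ̃ = ⋃_k (2^{-m_k}ℕ ∩ [n_k, n_{k+1}))`. -/
def tildeLambda (m n : ℕ → ℕ) : Set ℝ :=
  ⋃ k : ℕ, {x : ℝ | (∃ j : ℕ, x = (j : ℝ) / 2 ^ m k) ∧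
    (n k : ℝ) ≤ x ∧ x < (n (k+1) : ℝ)}

open Set Function

section Probability

variable {Ω ι κ β : Type*} [MeasurableSpace Ω] [MeasurableSpace β] {μ : Measure Ω}

theorem measure_preimage_false_eq [IsProbabilityMeasure μ] {f : Ω → Bool} (hf : Measurable f)
    {p : ℝ} (hp : 0 ≤ p) (h : μ {ω | f ω = true} = ENNReal.ofReal p) :
    μ (f ⁻¹' {false}) = ENNReal.ofReal (1 - p) := by
  rw [show f ⁻¹' {false} = {ω | f ω = true}ᶜ by ext; simp,
    prob_compl_eq_one_sub (s := {ω | f ω = true}) (hf (measurableSet_singleton true)), h,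
    ENNReal.ofReal_sub _ hp, ENNReal.ofReal_one]

theorem ProbabilityTheory.iIndepFun.iIndepSet_biInter_preimage {X : ι → Ω → β}
    (hXm : ∀ i, Measurable (X i)) (hX : iIndepFun X μ) {s : Set β} (hs : MeasurableSet s)
    {J : κ → Finset ι} (hJ : Pairwise (Disjoint on J)) :
    iIndepSet (fun k => ⋂ i ∈ J k, X i ⁻¹' s) μ := by
  classical
  rw [iIndepSet_iff_meas_biInter fun k => Finset.measurableSet_biInter _ fun i _ => hXm i hs]
  intro T
  rw [← Finset.set_biInter_biUnion, hX.measure_inter_preimage_eq_mul _ fun _ _ => hs,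
    Finset.prod_biUnion (hJ.set_pairwise _)]
  exact Finset.prod_congr rfl fun k _ =>
    (hX.measure_inter_preimage_eq_mul _ fun _ _ => hs).symm

theorem ae_infinite_setOf_mem_of_iIndepSet [Countable κ] {s : κ → Set Ω}
    (hsm : ∀ k, MeasurableSet (s k)) (hs : iIndepSet s μ) (hsum : ∑' k, μ (s k) = ∞) :
    ∀ᵐ ω ∂μ, {k | ω ∈ s k}.Infinite := by
  have := hs.isProbabilityMeasure
  have : Infinite κ := by
    by_contra hfin
    have : Finite κ := not_infinite_iff_finite.1 hfin
    have := Fintype.ofFinite κ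
    rw [tsum_fintype] at hsum
    exact ENNReal.sum_ne_top.2 (fun k _ => measure_ne_top μ (s k)) hsum
  obtain ⟨e⟩ := nonempty_equiv_of_countable (α := ℕ) (β := κ)
  have hlimsup : μ (limsup (s ∘ e) atTop) = 1 :=
    measure_limsup_eq_one (fun i => hsm (e i)) (hs.precomp e.injective)
      (by rwa [← e.tsum_eq] at hsum)
  have hae : ∀ᵐ ω ∂μ, ω ∈ limsup (s ∘ e) atTop :=
    (mem_ae_iff_prob_eq_one (MeasurableSet.measurableSet_limsup fun i => hsm (e i))).2 hlimsup
  filter_upwards [hae] with ω hω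
  have hinf := Nat.frequently_atTop_iff_infinite.1 (mem_limsup_iff_frequently_mem.1 hω)
  exact (hinf.image e.injective.injOn).mono (by rintro _ ⟨i, hi, rfl⟩; exact hi)

end Probability

theorem one_sub_one_sub_pow_le {x : ℝ} (hx : x ≤ 2) (N : ℕ) : 1 - (1 - x) ^ N ≤ N * x := by
  have := one_add_mul_le_pow (a := -x) (by linarith) N
  rw [← sub_eq_add_neg] at this
  linarith

theorem tsum_natCast_mul_ofReal_eq_top_of_not_summable {x : ℕ → ℝ} {N : ℕ → ℕ}
    (hx0 : ∀ k, 0 ≤ x k) (hx1 : ∀ k, x k ≤ 1) (h : ¬ Summable fun k => 1 - (1 - x k) ^ N k) :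
    ∑' k, (N k : ℝ≥0∞) * ENNReal.ofReal (x k) = ∞ := by
  by_contra hne
  refine h (Summable.of_nonneg_of_le (fun k => ?_)
    (fun k => one_sub_one_sub_pow_le (by linarith [hx1 k]) (N k)) ?_)
  · exact sub_nonneg.2 (pow_le_one₀ (by linarith [hx1 k]) (by linarith [hx0 k]))
  · simpa [ENNReal.toReal_mul, ENNReal.toReal_ofReal (hx0 _)] using
      ENNReal.summable_toReal hne

theorem exists_forall_exists_Icc_notMem {S : Set ℝ}
    (h : ∀ N : ℕ, ∃ a : ℕ, N ≤ a ∧ ∀ x ∈ S, x ∉ Ico (a : ℝ) (a + 1)) :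
    ∃ a : ℝ, 0 < a ∧ ∀ N : ℝ, ∃ x ≥ N, ∀ y ∈ Icc x (x + a), y ∉ S := by
  refine ⟨1 / 2, by norm_num, fun N => ?_⟩
  obtain ⟨K, hK⟩ := exists_nat_ge N
  obtain ⟨a, hKa, ha⟩ := h K
  refine ⟨a, hK.trans (Nat.cast_le.2 hKa), fun y hy hyS => ha y hyS ⟨hy.1, ?_⟩⟩
  linarith [hy.2]

noncomputable def dyadicCell (r c : ℕ) : Finset ℝ :=
  (Finset.Ico (2 ^ r * c) (2 ^ r * (c + 1))).image fun j : ℕ => (j : ℝ) / 2 ^ r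

theorem mem_dyadicCell {r c : ℕ} {x : ℝ} :
    x ∈ dyadicCell r c ↔ (∃ j : ℕ, x = j / 2 ^ r) ∧ x ∈ Ico (c : ℝ) (c + 1) := by
  have h2 : (0 : ℝ) < 2 ^ r := by positivity
  have hle : ∀ j d : ℕ, (d : ℝ) ≤ j / 2 ^ r ↔ 2 ^ r * d ≤ j := fun j d => by
    rw [le_div_iff₀ h2, ← Nat.cast_le (α := ℝ)]
    push_cast
    rw [mul_comm]
  have hlt : ∀ j : ℕ, (j : ℝ) / 2 ^ r < c + 1 ↔ j < 2 ^ r * (c + 1) := fun j => by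
    simpa using (hle j (c + 1)).not
  simp only [dyadicCell, Finset.mem_image, Finset.mem_Ico, mem_Ico]
  constructor
  · rintro ⟨j, hj, rfl⟩
    exact ⟨⟨j, rfl⟩, (hle j c).2 hj.1, (hlt j).2 hj.2⟩
  · rintro ⟨⟨j, rfl⟩, hcj, hjc⟩
    exact ⟨j, ⟨(hle j c).1 hcj, (hlt j).1 hjc⟩, rfl⟩

theorem card_dyadicCell (r c : ℕ) : (dyadicCell r c).card = 2 ^ r := by
  rw [dyadicCell, Finset.card_image_of_injective, Nat.card_Ico, Nat.mul_add]
  · omega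
  · intro i j hij
    exact_mod_cast (div_left_inj' (by positivity : (2 : ℝ) ^ r ≠ 0)).1 hij

theorem mem_tildeLambda_iff_of_mem_Ico {m n : ℕ → ℕ} (hn : Monotone n) {k : ℕ} {x : ℝ}
    (hx : x ∈ Ico (n k : ℝ) (n (k + 1))) :
    x ∈ tildeLambda m n ↔ ∃ j : ℕ, x = j / 2 ^ m k := by
  constructor
  · intro hmem
    obtain ⟨k', hj, hk'⟩ := mem_iUnion.1 hmem
    obtain rfl : k' = k := by
      by_contra hne
      exact disjoint_left.1 ((Nat.mono_cast.comp hn).pairwise_disjoint_on_Ico_succ hne) hk' hx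
    exact hj
  · intro hj
    exact mem_iUnion.2 ⟨k, hj, hx⟩

/-- The unit intervals `[n k + a, n k + a + 1)` inside the blocks `[n k, n (k+1))`,
encoded by `⟨k, a⟩`. -/
abbrev UnitCell (n : ℕ → ℕ) := Σ k : ℕ, Fin (n (k + 1) - n k)

namespace UnitCell

variable {m n : ℕ → ℕ}

def left (v : UnitCell n) : ℕ := n v.1 + v.2

theorem le_left (v : UnitCell n) : n v.1 ≤ v.left := Nat.le_add_right _ _

theorem left_lt (v : UnitCell n) : v.left < n (v.1 + 1) := by
  have := v.2.isLt
  unfold left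
  omega

theorem Ico_left_subset (v : UnitCell n) :
    Ico (v.left : ℝ) (v.left + 1) ⊆ Ico (n v.1 : ℝ) (n (v.1 + 1)) := by
  apply Ico_subset_Ico (Nat.cast_le.2 v.le_left)
  exact_mod_cast v.left_lt

theorem left_injective (hn : Monotone n) : Injective (left (n := n)) := by
  rintro ⟨k, a⟩ ⟨k', a'⟩ h
  obtain rfl : k = k' := by
    by_contra hne
    refine disjoint_left.1 (hn.pairwise_disjoint_on_Ico_succ hne)
      ⟨le_left (n := n) ⟨k, a⟩, left_lt ⟨k, a⟩⟩ ?_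
    rw [h]
    exact ⟨le_left (n := n) ⟨k', a'⟩, left_lt ⟨k', a'⟩⟩
  obtain rfl : a = a' := Fin.ext (by simpa [left] using h)
  rfl

noncomputable def points (m : ℕ → ℕ) (v : UnitCell n) : Finset (tildeLambda m n) :=
  (dyadicCell (m v.1) v.left).preimage Subtype.val Subtype.val_injective.injOn

theorem mem_points (hn : Monotone n) {v : UnitCell n} {x : tildeLambda m n} :
    x ∈ v.points m ↔ (x : ℝ) ∈ Ico (v.left : ℝ) (v.left + 1) := by
  rw [points, Finset.mem_preimage, mem_dyadicCell, and_iff_right_iff_imp]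
  exact fun hx => (mem_tildeLambda_iff_of_mem_Ico hn (v.Ico_left_subset hx)).1 x.2

theorem card_points (hn : Monotone n) (v : UnitCell n) : (v.points m).card = 2 ^ m v.1 := by
  classical
  rw [points, Finset.card_preimage, Finset.filter_true_of_mem, card_dyadicCell]
  intro x hx
  rw [mem_dyadicCell] at hx
  rw [Subtype.range_val]
  exact (mem_tildeLambda_iff_of_mem_Ico hn (v.Ico_left_subset hx.2)).2 hx.1

theorem pairwise_disjoint_points (hn : Monotone n) :
    Pairwise (Disjoint on fun v : UnitCell n => v.points m) := by
  intro v w hvw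
  refine Finset.disjoint_left.2 fun x hv hw => hvw (left_injective hn ?_)
  rw [mem_points hn] at hv hw
  exact_mod_cast (Nat.floor_eq_on_Ico _ _ hv).symm.trans (Nat.floor_eq_on_Ico _ _ hw)

theorem tsum_comp_fst (f : ℕ → ℝ≥0∞) :
    ∑' v : UnitCell n, f v.1 = ∑' k, ((n (k + 1) - n k : ℕ) : ℝ≥0∞) * f k := by
  simp only [ENNReal.tsum_sigma', tsum_fintype, Finset.sum_const, Finset.card_univ,
    Fintype.card_fin, nsmul_eq_mul]

theorem exists_lt_left_of_infinite (hn : Monotone n) {T : Set (UnitCell n)} (hT : T.Infinite)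
    (N : ℕ) : ∃ v ∈ T, N < v.left := by
  obtain ⟨_, ⟨v, hv, rfl⟩, hNv⟩ := (hT.image (left_injective hn).injOn).exists_gt N
  exact ⟨v, hv, hNv⟩

theorem exists_block_ge_of_forall_exists_lt_left (hn : Monotone n) {S : Set ℝ}
    (h : ∀ N : ℕ, ∃ v : UnitCell n, N < v.left ∧ ∀ x ∈ S, x ∉ Ico (v.left : ℝ) (v.left + 1))
    (K : ℕ) :
    ∃ k ≥ K, ∃ a : ℕ, n k ≤ a ∧ a + 1 ≤ n (k + 1) ∧ ∀ x ∈ S, x ∉ Ico (a : ℝ) (a + 1) := by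
  obtain ⟨v, hKv, hv⟩ := h (n K)
  have hK : K < v.1 + 1 := hn.reflect_lt (hKv.trans v.left_lt)
  exact ⟨v.1, by omega, v.left, v.le_left, v.left_lt, hv⟩

end UnitCell

theorem random_deletion_type_two_general
    {Ω : Type*} [MeasurableSpace Ω] (P : Measure Ω) [IsProbabilityMeasure P]
    (p q : ℝ) (hp : 0 < p) (hp1 : p < 1) (hq : q = 1 - p)
    (m n : ℕ → ℕ) (hn : StrictMono n)
    (X : ↥(tildeLambda m n) → Ω → Bool) (hXm : ∀ i, Measurable (X i))
    (hindep : iIndepFun X P)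
    (hX : ∀ i, P {ω | X i ω = true} = ENNReal.ofReal p)
    (Lam : Ω → Set ℝ)
    (hLam : ∀ ω, Lam ω = {x : ℝ | ∃ h : x ∈ tildeLambda m n, X ⟨x, h⟩ ω = true})
    (hdiv : ¬ Summable fun k : ℕ =>
      1 - (1 - q ^ (2 ^ m k)) ^ (n (k+1) - n k)) :
    ∀ᵐ ω ∂P,
      (∀ K : ℕ, ∃ k ≥ K, ∃ a : ℕ, n k ≤ a ∧ a + 1 ≤ n (k+1) ∧
        ∀ x ∈ Lam ω, x ∉ Set.Ico (a : ℝ) ((a : ℝ) + 1)) ∧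
      ∃ a : ℝ, 0 < a ∧ ∀ N : ℝ, ∃ x ≥ N, ∀ y ∈ Set.Icc x (x + a), y ∉ Lam ω := by
  have hq0 : 0 ≤ q := by linarith
  have hcell : ∀ v : UnitCell n, P (⋂ i ∈ v.points m, X i ⁻¹' {false}) =
      ENNReal.ofReal (q ^ 2 ^ m v.1) := fun v => by
    rw [hindep.measure_inter_preimage_eq_mul _ fun _ _ => measurableSet_singleton _,
      Finset.prod_congr rfl fun i _ => hq ▸ measure_preimage_false_eq (hXm i) hp.le (hX i),
      Finset.prod_const, UnitCell.card_points hn.monotone, ENNReal.ofReal_pow hq0]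
  have hsum : ∑' v : UnitCell n, P (⋂ i ∈ v.points m, X i ⁻¹' {false}) = ∞ := by
    simp only [hcell, UnitCell.tsum_comp_fst (fun k => ENNReal.ofReal (q ^ 2 ^ m k))]
    exact tsum_natCast_mul_ofReal_eq_top_of_not_summable (fun k => by positivity)
      (fun k => pow_le_one₀ hq0 (by linarith)) hdiv
  filter_upwards [ae_infinite_setOf_mem_of_iIndepSet
    (fun v => Finset.measurableSet_biInter _ fun i _ => hXm i (measurableSet_singleton _))
    (hindep.iIndepSet_biInter_preimage hXm (measurableSet_singleton false)
      (UnitCell.pairwise_disjoint_points hn.monotone)) hsum] with ω hω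
  have hfree : ∀ v : UnitCell n, ω ∈ ⋂ i ∈ v.points m, X i ⁻¹' {false} →
      ∀ x ∈ Lam ω, x ∉ Ico (v.left : ℝ) (v.left + 1) := by
    rintro v hv x hx hxv
    rw [hLam] at hx
    obtain ⟨hxΛ, htrue⟩ := hx
    simpa [htrue] using mem_iInter₂.1 hv ⟨x, hxΛ⟩ ((UnitCell.mem_points hn.monotone).2 hxv)
  have hlarge : ∀ N : ℕ, ∃ v : UnitCell n,
      N < v.left ∧ ∀ x ∈ Lam ω, x ∉ Ico (v.left : ℝ) (v.left + 1) := fun N =>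
    let ⟨v, hv, hNv⟩ := UnitCell.exists_lt_left_of_infinite hn.monotone hω N
    ⟨v, hNv, hfree v hv⟩
  refine ⟨UnitCell.exists_block_ge_of_forall_exists_lt_left hn.monotone hlarge,
    exists_forall_exists_Icc_notMem fun N => ?_⟩
  obtain ⟨v, hNv, hv⟩ := hlarge N
  exact ⟨v.left, hNv.le, hv⟩

/-- Random deletion: each point of `Λ̃` is kept independently with probability `p`.
If `∑_k (1 - (1 - q^{2^{m_k}})^{n_{k+1}-n_k}) = ∞` (with `q = 1-p`), then almost
surely infinitely many blocks `[n_k, n_{k+1})` contain a fully deleted unit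
interval `[a, a+1)`; in particular the random set is a.s. asymptotically lacunary. -/
theorem random_deletion_type_two
    {Ω : Type*} [MeasurableSpace Ω] (P : Measure Ω) [IsProbabilityMeasure P]
    (p q : ℝ) (hp : 0 < p) (hp1 : p < 1) (hq : q = 1 - p)
    (m n : ℕ → ℕ) (hm : StrictMono m) (hn : StrictMono n)
    (hm0 : 0 < m 0) (hn0 : 0 < n 0)
    (X : ↥(tildeLambda m n) → Ω → Bool) (hXm : ∀ i, Measurable (X i))
    (hindep : iIndepFun X P)
    (hX : ∀ i, P {ω | X i ω = true} = ENNReal.ofReal p)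
    (Lam : Ω → Set ℝ)
    (hLam : ∀ ω, Lam ω = {x : ℝ | ∃ h : x ∈ tildeLambda m n, X ⟨x, h⟩ ω = true})
    (hdiv : ¬ Summable fun k : ℕ =>
      1 - (1 - q ^ (2 ^ m k)) ^ (n (k+1) - n k)) :
    ∀ᵐ ω ∂P,
      (∀ K : ℕ, ∃ k ≥ K, ∃ a : ℕ, n k ≤ a ∧ a + 1 ≤ n (k+1) ∧
        ∀ x ∈ Lam ω, x ∉ Set.Ico (a : ℝ) ((a : ℝ) + 1)) ∧
      ∃ a : ℝ, 0 < a ∧ ∀ N : ℝ, ∃ x ≥ N, ∀ y ∈ Set.Icc x (x + a), y ∉ Lam ω :=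
  random_deletion_type_two_general P p q hp hp1 hq m n hn X hXm hindep hX Lam hLam hdiv
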